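/- arXiv:2510.16356 — 2 statements merged into one kernel-verified Lean document; each statement's English description precedes it below -/
import Mathlib

section
/- Let d ≥ 1, let v : ℝ × ℝ^d → ℝ^d be continuously differentiable, and let ρ : ℝ × ℝ^d → ℝ be continuously differentiable and strictly positive, satisfying ∂_tρ(t,x) + div_x(ρ(t,x) v(t,x)) = 0 for all (t,x). Let T > 0 and let x : [0,T] → ℝ^d be differentiable with x'(t) = v(t, x(t)) for all t ∈ [0,T]. Then log ρ(T, x(T)) = log ρ(0, x(0)) − ∫_0^T (div_x v)(t, x(t)) dt. -/
/-!
Along a trajectory of `v`, the chain rule gives `d/dt ρ(t, γ t) = ∂ₜρ + ∇ₓρ · v`, and the product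
rule `divₓ(ρ v) = ∇ₓρ · v + ρ divₓ v` turns the continuity equation into
`d/dt ρ(t, γ t) = -ρ divₓ v`. Hence `d/dt log ρ(t, γ t) = -(divₓ v)(t, γ t)`, which is continuous in
`t`, and the fundamental theorem of calculus on `[0, T]` gives the identity.
-/

/-- The divergence of a vector field `F : ℝᵈ → ℝᵈ`. -/
noncomputable def dvg {d : ℕ}
    (F : EuclideanSpace ℝ (Fin d) → EuclideanSpace ℝ (Fin d))
    (x : EuclideanSpace ℝ (Fin d)) : ℝ :=
  ∑ i, fderiv ℝ (fun y => F y i) x (EuclideanSpace.single i 1)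

open Set

section Partial

variable {E F : Type*} [NormedAddCommGroup E] [NormedSpace ℝ E]
  [NormedAddCommGroup F] [NormedSpace ℝ F] {f : ℝ → E → F} {t : ℝ} {x : E}

theorem hasFDerivAt_partial_snd
    (hf : DifferentiableAt ℝ (fun p : ℝ × E => f p.1 p.2) (t, x)) :
    HasFDerivAt (f t)
      ((fderiv ℝ (fun p : ℝ × E => f p.1 p.2) (t, x)).comp (ContinuousLinearMap.inr ℝ ℝ E)) x :=
  hf.hasFDerivAt.comp x (hasFDerivAt_prodMk_right t x)

theorem hasDerivAt_partial_fst
    (hf : DifferentiableAt ℝ (fun p : ℝ × E => f p.1 p.2) (t, x)) :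
    HasDerivAt (fun s => f s x) (fderiv ℝ (fun p : ℝ × E => f p.1 p.2) (t, x) (1, 0)) t := by
  have hpath : HasDerivAt (fun s : ℝ => (s, x)) ((1 : ℝ), (0 : E)) t :=
    (hasDerivAt_id t).prodMk (hasDerivAt_const t x)
  exact hf.hasFDerivAt.comp_hasDerivAt t hpath

theorem hasDerivAt_comp_curve {γ : ℝ → E} {γ' : E}
    (hf : DifferentiableAt ℝ (fun p : ℝ × E => f p.1 p.2) (t, γ t)) (hγ : HasDerivAt γ γ' t) :
    HasDerivAt (fun s => f s (γ s))
      (deriv (fun s => f s (γ t)) t + fderiv ℝ (f t) (γ t) γ') t := by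
  have hpath : HasDerivAt (fun s : ℝ => (s, γ s)) ((1 : ℝ), γ') t := (hasDerivAt_id t).prodMk hγ
  have hcurve := hf.hasFDerivAt.comp_hasDerivAt t hpath
  rwa [(hasDerivAt_partial_fst hf).deriv, (hasFDerivAt_partial_snd hf).fderiv,
    ContinuousLinearMap.comp_apply, ContinuousLinearMap.inr_apply, ← map_add,
    Prod.mk_add_mk, add_zero, zero_add]

end Partial

section Divergence

variable {d : ℕ}

local notation "E" => EuclideanSpace ℝ (Fin d)

theorem dvg_eq_sum_of_hasFDerivAt {F : E → E} {L : E →L[ℝ] E} {x : E}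
    (h : HasFDerivAt F L x) :
    dvg F x = ∑ i, L (EuclideanSpace.single i 1) i :=
  Finset.sum_congr rfl fun i _ =>
    congrArg (· (EuclideanSpace.single i 1))
      ((EuclideanSpace.proj (𝕜 := ℝ) i).hasFDerivAt.comp x h).fderiv

theorem ContinuousLinearMap.apply_eq_sum_single (L : E →L[ℝ] ℝ) (u : E) :
    L u = ∑ i, u i * L (EuclideanSpace.single i 1) := by
  conv_lhs => rw [← (EuclideanSpace.basisFun (Fin d) ℝ).sum_repr u]
  simp [EuclideanSpace.basisFun_apply]

theorem dvg_smul_of_hasFDerivAt {f : E → ℝ} {F : E → E} {Df : E →L[ℝ] ℝ} {DF : E →L[ℝ] E} {x : E}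
    (hf : HasFDerivAt f Df x) (hF : HasFDerivAt F DF x) :
    dvg (fun y => f y • F y) x = Df (F x) + f x * dvg F x := by
  rw [dvg_eq_sum_of_hasFDerivAt (F := fun y => f y • F y) (hf.smul hF),
    dvg_eq_sum_of_hasFDerivAt hF, Df.apply_eq_sum_single, Finset.mul_sum, ← Finset.sum_add_distrib]
  refine Finset.sum_congr rfl fun i _ => ?_
  simp only [_root_.add_apply, _root_.smul_apply, ContinuousLinearMap.smulRight_apply,
    PiLp.add_apply, PiLp.smul_apply, smul_eq_mul]
  ring

theorem continuous_dvg_of_contDiff {v : ℝ → E → E}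
    (hv : ContDiff ℝ 1 (fun p : ℝ × E => v p.1 p.2)) :
    Continuous (fun p : ℝ × E => dvg (v p.1) p.2) := by
  have hdvg : ∀ p : ℝ × E, dvg (v p.1) p.2 =
      ∑ i, fderiv ℝ (fun p : ℝ × E => v p.1 p.2) p (0, EuclideanSpace.single i 1) i := fun p =>
    dvg_eq_sum_of_hasFDerivAt (hasFDerivAt_partial_snd (hv.differentiable one_ne_zero p))
  simp_rw [hdvg]
  have hD := hv.continuous_fderiv one_ne_zero
  fun_prop

theorem hasDerivAt_along_trajectory {v : ℝ → E → E} {ρ : ℝ → E → ℝ} {γ : ℝ → E} {t : ℝ}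
    (hv : DifferentiableAt ℝ (fun p : ℝ × E => v p.1 p.2) (t, γ t))
    (hρ : DifferentiableAt ℝ (fun p : ℝ × E => ρ p.1 p.2) (t, γ t))
    (htransport : deriv (fun s => ρ s (γ t)) t + dvg (fun y => ρ t y • v t y) (γ t) = 0)
    (hγ : HasDerivAt γ (v t (γ t)) t) :
    HasDerivAt (fun s => ρ s (γ s)) (-(ρ t (γ t) * dvg (v t) (γ t))) t := by
  have hρx := hasFDerivAt_partial_snd hρ
  rw [dvg_smul_of_hasFDerivAt hρx (hasFDerivAt_partial_snd hv), ← hρx.fderiv] at htransport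
  exact (hasDerivAt_comp_curve hρ hγ).congr_deriv (by linarith)

theorem hasDerivAt_log_along_trajectory {v : ℝ → E → E} {ρ : ℝ → E → ℝ} {γ : ℝ → E} {t : ℝ}
    (hv : DifferentiableAt ℝ (fun p : ℝ × E => v p.1 p.2) (t, γ t))
    (hρ : DifferentiableAt ℝ (fun p : ℝ × E => ρ p.1 p.2) (t, γ t)) (hρpos : 0 < ρ t (γ t))
    (htransport : deriv (fun s => ρ s (γ t)) t + dvg (fun y => ρ t y • v t y) (γ t) = 0)
    (hγ : HasDerivAt γ (v t (γ t)) t) :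
    HasDerivAt (fun s => Real.log (ρ s (γ s))) (-dvg (v t) (γ t)) t := by
  convert (hasDerivAt_along_trajectory hv hρ htransport hγ).log hρpos.ne' using 1
  field_simp

end Divergence

theorem log_density_integral_identity_general
    (d : ℕ) (T : ℝ) (hT : 0 < T)
    (v : ℝ → EuclideanSpace ℝ (Fin d) → EuclideanSpace ℝ (Fin d))
    (hv : ContDiff ℝ 1 (fun p : ℝ × EuclideanSpace ℝ (Fin d) => v p.1 p.2))
    (ρ : ℝ → EuclideanSpace ℝ (Fin d) → ℝ)
    (hρ : ContDiff ℝ 1 (fun p : ℝ × EuclideanSpace ℝ (Fin d) => ρ p.1 p.2))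
    (hρpos : ∀ t x, 0 < ρ t x)
    (htransport : ∀ t x,
      deriv (fun s => ρ s x) t + dvg (fun y => ρ t y • v t y) x = 0)
    (γ : ℝ → EuclideanSpace ℝ (Fin d))
    (hγ : ∀ t ∈ Set.Icc (0 : ℝ) T, HasDerivAt γ (v t (γ t)) t) :
    Real.log (ρ T (γ T))
      = Real.log (ρ 0 (γ 0)) - ∫ t in (0 : ℝ)..T, dvg (v t) (γ t) := by
  rw [← uIcc_of_le hT.le] at hγ
  have hlog : ∀ t ∈ uIcc 0 T,
      HasDerivAt (fun s => Real.log (ρ s (γ s))) (-dvg (v t) (γ t)) t := fun t ht =>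
    hasDerivAt_log_along_trajectory (hv.differentiable one_ne_zero _)
      (hρ.differentiable one_ne_zero _) (hρpos t (γ t)) (htransport t (γ t)) (hγ t ht)
  have hγc : ContinuousOn γ (uIcc 0 T) := fun t ht => (hγ t ht).continuousAt.continuousWithinAt
  have hdvg : ContinuousOn (fun t => dvg (v t) (γ t)) (uIcc 0 T) :=
    (continuous_dvg_of_contDiff hv).comp_continuousOn (continuousOn_id.prodMk hγc)
  have hFTC := intervalIntegral.integral_eq_sub_of_hasDerivAt hlog hdvg.neg.intervalIntegrable
  rw [intervalIntegral.integral_neg] at hFTC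
  linarith

/-- **Log-density evolution along trajectories.**
If the strictly positive C¹ density ρ satisfies the continuity equation
∂ₜρ + divₓ(ρv) = 0 for the C¹ velocity field v, then along any trajectory
γ'(t) = v(t, γ(t)) on [0,T] one has
log ρ(T, γ(T)) = log ρ(0, γ(0)) − ∫₀ᵀ (divₓ v)(t, γ(t)) dt. -/
theorem log_density_integral_identity
    (d : ℕ) (hd : 1 ≤ d) (T : ℝ) (hT : 0 < T)
    (v : ℝ → EuclideanSpace ℝ (Fin d) → EuclideanSpace ℝ (Fin d))
    (hv : ContDiff ℝ 1 (fun p : ℝ × EuclideanSpace ℝ (Fin d) => v p.1 p.2))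
    (ρ : ℝ → EuclideanSpace ℝ (Fin d) → ℝ)
    (hρ : ContDiff ℝ 1 (fun p : ℝ × EuclideanSpace ℝ (Fin d) => ρ p.1 p.2))
    (hρpos : ∀ t x, 0 < ρ t x)
    (htransport : ∀ t x,
      deriv (fun s => ρ s x) t + dvg (fun y => ρ t y • v t y) x = 0)
    (γ : ℝ → EuclideanSpace ℝ (Fin d))
    (hγ : ∀ t ∈ Set.Icc (0 : ℝ) T, HasDerivAt γ (v t (γ t)) t) :
    Real.log (ρ T (γ T))
      = Real.log (ρ 0 (γ 0)) - ∫ t in (0 : ℝ)..T, dvg (v t) (γ t) :=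
  log_density_integral_identity_general d T hT v hv ρ hρ hρpos htransport γ hγ
end

section
/- Let a > 0 and λ, γ ≥ 0, and let y : [0,∞) → ℝ be a differentiable function with y(t) ≥ 0 for all t ≥ 0 and satisfying the differential inequality y'(t) ≤ −a·y(t) − λγ·√a·√(y(t)) for all t ≥ 0. Then for all t ≥ 0, y(t) ≤ ( max{ (√(y(0)) + λγ/√a)·e^{−(a/2)t} − λγ/√a , 0 } )². -/
/-! Since `λγ ≥ 0`, the inequality gives `y' ≤ -a y`, so `y t · e^{a t}` is nonincreasing and a
positive value `y t` forces `y > 0` on all of `[0, t]`. There `u = √y` is differentiable and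
`u' = y' / (2u) ≤ -(a/2) (u + λγ/√a)`, so `(u + λγ/√a) · e^{(a/2) t}` is nonincreasing as well,
which is the claim after squaring. -/

open Real Set

section ExpDecay

variable {D : Set ℝ} {y : ℝ → ℝ} {a b s t : ℝ}

theorem antitoneOn_mul_exp_of_deriv_le_neg_mul (hD : Convex ℝ D)
    (hdiff : ∀ t ∈ D, DifferentiableAt ℝ y t) (hineq : ∀ t ∈ D, deriv y t ≤ -a * y t) :
    AntitoneOn (fun t => y t * exp (a * t)) D := by
  have hexp (t : ℝ) : HasDerivAt (fun t => exp (a * t)) (exp (a * t) * a) t := by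
    simpa using ((hasDerivAt_id t).const_mul a).exp
  have hderiv (t : ℝ) (ht : t ∈ D) : HasDerivAt (fun t => y t * exp (a * t))
      (deriv y t * exp (a * t) + y t * (exp (a * t) * a)) t :=
    (hdiff t ht).hasDerivAt.mul (hexp t)
  apply antitoneOn_of_deriv_nonpos hD
  · exact fun t ht => (hderiv t ht).continuousAt.continuousWithinAt
  · exact fun t ht => (hderiv t (interior_subset ht)).differentiableAt.differentiableWithinAt
  · intro t ht
    rw [(hderiv t (interior_subset ht)).deriv]
    nlinarith [mul_le_mul_of_nonneg_right (hineq t (interior_subset ht)) (exp_pos (a * t)).le]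

theorem le_mul_exp_of_deriv_le_neg_mul (hD : Convex ℝ D)
    (hdiff : ∀ t ∈ D, DifferentiableAt ℝ y t) (hineq : ∀ t ∈ D, deriv y t ≤ -a * y t)
    (hs : s ∈ D) (ht : t ∈ D) (hst : s ≤ t) : y t ≤ y s * exp (-a * (t - s)) := by
  have h := antitoneOn_mul_exp_of_deriv_le_neg_mul hD hdiff hineq hs ht hst
  have hsplit : exp (a * t) * exp (-a * (t - s)) = exp (a * s) := by
    rw [← exp_add]; ring_nf
  calc y t = y t * exp (a * t) * exp (-a * (t - s)) / exp (a * s) := by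
        rw [mul_assoc, hsplit, mul_div_cancel_right₀ _ (exp_pos _).ne']
    _ ≤ y s * exp (a * s) * exp (-a * (t - s)) / exp (a * s) := by gcongr
    _ = y s * exp (-a * (t - s)) := by
        rw [mul_right_comm, mul_div_cancel_right₀ _ (exp_pos _).ne']

theorem deriv_sqrt_comp_le (hy : 0 < y t) (hdiff : DifferentiableAt ℝ y t)
    (hineq : deriv y t ≤ -a * y t - b * √(y t)) :
    deriv (fun t => √(y t)) t ≤ -(a / 2) * √(y t) - b / 2 := by
  rw [(hdiff.hasDerivAt.sqrt hy.ne').deriv, div_le_iff₀ (by positivity)]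
  calc deriv y t ≤ -a * y t - b * √(y t) := hineq
    _ = (-(a / 2) * √(y t) - b / 2) * (2 * √(y t)) := by
        linear_combination a * mul_self_sqrt hy.le

theorem sqrt_add_le_mul_exp_of_deriv_le (hD : Convex ℝ D) (ha : a ≠ 0)
    (hdiff : ∀ t ∈ D, DifferentiableAt ℝ y t) (hpos : ∀ t ∈ D, 0 < y t)
    (hineq : ∀ t ∈ D, deriv y t ≤ -a * y t - b * √(y t))
    (hs : s ∈ D) (ht : t ∈ D) (hst : s ≤ t) :
    √(y t) + b / a ≤ (√(y s) + b / a) * exp (-(a / 2) * (t - s)) := by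
  refine le_mul_exp_of_deriv_le_neg_mul (y := fun t => √(y t) + b / a) hD
    (fun t ht => ((hdiff t ht).sqrt (hpos t ht).ne').add_const _) (fun t ht => ?_) hs ht hst
  rw [deriv_add_const]
  calc deriv (fun t => √(y t)) t ≤ -(a / 2) * √(y t) - b / 2 :=
        deriv_sqrt_comp_le (hpos t ht) (hdiff t ht) (hineq t ht)
    _ = -(a / 2) * (√(y t) + b / a) := by field_simp; ring

end ExpDecay

theorem kl_decay_comparison_general
    (a lam gam : ℝ) (ha : 0 < a) (hlam : 0 ≤ lam) (hgam : 0 ≤ gam)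
    (y : ℝ → ℝ)
    (hdiff : ∀ t ≥ (0 : ℝ), DifferentiableAt ℝ y t)
    (hineq : ∀ t ≥ (0 : ℝ),
      deriv y t ≤ -a * y t - lam * gam * Real.sqrt a * Real.sqrt (y t)) :
    ∀ t ≥ (0 : ℝ),
      y t ≤ (max ((Real.sqrt (y 0) + lam * gam / Real.sqrt a)
          * Real.exp (-(a / 2) * t) - lam * gam / Real.sqrt a) 0) ^ 2 := by
  intro t ht
  rcases le_or_gt (y t) 0 with hle | hpos
  · exact hle.trans (sq_nonneg _)
  have hdecay : ∀ s ≥ (0 : ℝ), deriv y s ≤ -a * y s := fun s hs => by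
    have : 0 ≤ lam * gam * √a * √(y s) := by positivity
    linarith [hineq s hs]
  have hypos : ∀ s ∈ Icc 0 t, 0 < y s := fun s hs => by
    have h := le_mul_exp_of_deriv_le_neg_mul (convex_Ici 0) hdiff hdecay hs.1 ht hs.2
    exact pos_of_mul_pos_left (hpos.trans_le h) (exp_pos _).le
  have hsqrt := sqrt_add_le_mul_exp_of_deriv_le (convex_Icc 0 t) ha.ne'
    (fun s hs => hdiff s hs.1) hypos (fun s hs => hineq s hs.1)
    (left_mem_Icc.mpr ht) (right_mem_Icc.mpr ht) ht
  have hshift : lam * gam * √a / a = lam * gam / √a := by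
    rw [mul_div_assoc, sqrt_div_self', mul_one_div]
  rw [hshift, sub_zero] at hsqrt
  calc y t = √(y t) ^ 2 := (sq_sqrt hpos.le).symm
    _ ≤ _ := pow_le_pow_left₀ (sqrt_nonneg _) (le_max_of_le_left (by linarith)) 2

/-- **Comparison estimate for accelerated KL decay with an L¹ prior.**
If y ≥ 0 is differentiable on [0,∞) and satisfies
y'(t) ≤ −a·y(t) − λγ·√a·√(y(t)) for all t ≥ 0 (with a > 0, λ, γ ≥ 0), then
y(t) ≤ ( ((√(y(0)) + λγ/√a)·e^{−(a/2)t} − λγ/√a)₊ )² for all t ≥ 0. -/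
theorem kl_decay_comparison
    (a lam gam : ℝ) (ha : 0 < a) (hlam : 0 ≤ lam) (hgam : 0 ≤ gam)
    (y : ℝ → ℝ)
    (hdiff : ∀ t ≥ (0 : ℝ), DifferentiableAt ℝ y t)
    (hnonneg : ∀ t ≥ (0 : ℝ), 0 ≤ y t)
    (hineq : ∀ t ≥ (0 : ℝ),
      deriv y t ≤ -a * y t - lam * gam * Real.sqrt a * Real.sqrt (y t)) :
    ∀ t ≥ (0 : ℝ),
      y t ≤ (max ((Real.sqrt (y 0) + lam * gam / Real.sqrt a)
          * Real.exp (-(a / 2) * t) - lam * gam / Real.sqrt a) 0) ^ 2 :=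
  kl_decay_comparison_general a lam gam ha hlam hgam y hdiff hineq
end
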